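/- Let λ ∈ (0,1) be irrational, Γ = ℤ[λ, λ⁻¹], and consider the partial action of Γ ⋊ ⟨λ⟩ on the Cantor space [0₊, 1₋] ⊂ ℝ_Γ. This partial action is expansive: there exists ε > 0 such that for all distinct x, y ∈ [0₊, 1₋] there exists g ∈ Γ ⋊ ⟨λ⟩ with both gx, gy defined and d(gx, gy) > ε. -/

import Mathlib

/-- The doubled-points space `ℝ_Γ`: points of `ℝ \ Γ` together with two points
`a₋ = (a, false)` and `a₊ = (a, true)` for each `a ∈ Γ`, linearly ordered lexicographically. -/
def RGamma (Γ : Set ℝ) : Type :=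
  {p : ℝ ×ₗ Bool // (ofLex p).1 ∈ Γ ∨ (ofLex p).2 = false}

noncomputable instance (Γ : Set ℝ) : LinearOrder (RGamma Γ) :=
  inferInstanceAs (LinearOrder {p : ℝ ×ₗ Bool // (ofLex p).1 ∈ Γ ∨ (ofLex p).2 = false})

/-- `ℝ_Γ` carries the order topology. -/
noncomputable instance (Γ : Set ℝ) : TopologicalSpace (RGamma Γ) := Preorder.topology _

instance (Γ : Set ℝ) : OrderTopology (RGamma Γ) := ⟨rfl⟩

/-- The point `a₊` for `a ∈ Γ`. -/
def RGamma.plus (Γ : Set ℝ) (a : ℝ) (ha : a ∈ Γ) : RGamma Γ :=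
  ⟨toLex (a, true), Or.inl ha⟩

/-- The point `a₋` for `a ∈ Γ`. -/
def RGamma.minus (Γ : Set ℝ) (a : ℝ) (_ha : a ∈ Γ) : RGamma Γ :=
  ⟨toLex (a, false), Or.inr rfl⟩

/-- The canonical quotient map `q : ℝ_Γ → ℝ`, `t ↦ t`, `a₊, a₋ ↦ a`. -/
def RGamma.q (Γ : Set ℝ) (x : RGamma Γ) : ℝ := (ofLex x.1).1

/-- The action of a group element `(c, μ)` on `ℝ_Γ`: `x ↦ μ(q(x) + c)` with signs preserved,
given that the underlying affine map preserves `Γ`. -/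
def RGamma.act (Γ : Set ℝ) (c μ : ℝ) (h : ∀ t ∈ Γ, μ * (t + c) ∈ Γ) (x : RGamma Γ) :
    RGamma Γ :=
  ⟨toLex (μ * ((ofLex x.1).1 + c), (ofLex x.1).2), by
    rcases x.2 with h' | h'
    · exact Or.inl (h _ h')
    · exact Or.inr h'⟩

/-- `ℤ[λ, λ⁻¹]` as a subset of `ℝ`. -/
def steinRing (lam : ℝ) : Set ℝ := (Subring.closure {lam, lam⁻¹} : Subring ℝ)

/-- The Cantor space `[0₊, 1₋] ⊂ ℝ_Γ`. -/
def RGamma.unitInterval (Γ : Set ℝ) : Set (RGamma Γ) :=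
  {x | toLex ((0:ℝ), true) ≤ x.1 ∧ x.1 ≤ toLex ((1:ℝ), false)}

/-! The closed intervals of `ℝ_Γ` are compact, since every bounded set has a least upper bound,
read off from the supremum of its image in `ℝ`. Hence, for any compatible metric, the disjoint
intervals `L = [0₊, λ/4]` and `U = [λ/2, 1₋]` are at some positive distance `ε₁`; put
`ε₂ = d(λ₋, λ₊)`. Given `x < y` with `q x < q y`, a power `λⁿ` rescales `q y - q x` into
`(λ/2, 1/2]`, and a translation by an element of the dense group `Γ` then moves `x` into `L` and
`y` into `U`. If `q x = q y = a`, then `x = a₋` and `y = a₊`, and the translation by `λ - a` maps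
them to `λ₋` and `λ₊`. -/

open Set

noncomputable abbrev ConditionallyCompleteLinearOrder.ofExistsIsLUB {α : Type*} [LinearOrder α]
    [Inhabited α] (hlub : ∀ s : Set α, s.Nonempty → BddAbove s → ∃ c, IsLUB s c) :
    ConditionallyCompleteLinearOrder α :=
  have hglb (s : Set α) (hne : s.Nonempty) (hbdd : BddBelow s) : ∃ c, IsGLB s c :=
    (hlub _ hbdd (hne.mono fun _ hx _ hl => hl hx)).imp fun _ => isLUB_lowerBounds.1
  open Classical in
  { ‹LinearOrder α›, LinearOrder.toLattice with
    sSup s := if hs : s.Nonempty ∧ BddAbove s then (hlub s hs.1 hs.2).choose else default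
    sInf s := if hs : s.Nonempty ∧ BddBelow s then (hglb s hs.1 hs.2).choose else default
    isLUB_csSup s hne hs := by rw [dif_pos ⟨hne, hs⟩]; exact (hlub s hne hs).choose_spec
    isGLB_csInf s hne hs := by rw [dif_pos ⟨hne, hs⟩]; exact (hglb s hne hs).choose_spec
    csSup_of_not_bddAbove s hs := by
      rw [dif_neg fun h => hs h.2, dif_neg fun h => Set.not_nonempty_empty h.1]
    csInf_of_not_bddBelow s hs := by
      rw [dif_neg fun h => hs h.2, dif_neg fun h => Set.not_nonempty_empty h.1] }

theorem Metric.exists_pos_forall_lt_dist {X : Type*} [MetricSpace X] {s t : Set X}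
    (hs : IsCompact s) (ht : IsClosed t) (hst : Disjoint s t) :
    ∃ ε > (0 : ℝ), ∀ x ∈ s, ∀ y ∈ t, ε < dist x y := by
  obtain ⟨r, hr, h⟩ := Metric.exists_pos_forall_lt_edist hs ht hst
  refine ⟨r, hr, fun x hx y hy => ?_⟩
  have := h x hx y hy
  rwa [edist_nndist, ENNReal.coe_lt_coe, ← NNReal.coe_lt_coe, coe_nndist] at this

namespace RGamma

variable {Γ : Set ℝ}

def isPlus (x : RGamma Γ) : Bool := (ofLex x.1).2

def lower (Γ : Set ℝ) (r : ℝ) : RGamma Γ := ⟨toLex (r, false), Or.inr rfl⟩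

@[simp] lemma q_lower (r : ℝ) : q Γ (lower Γ r) = r := rfl

@[simp] lemma q_plus {a : ℝ} (ha : a ∈ Γ) : q Γ (plus Γ a ha) = a := rfl

@[simp] lemma isPlus_plus {a : ℝ} (ha : a ∈ Γ) : isPlus (plus Γ a ha) = true := rfl

@[simp] lemma q_minus {a : ℝ} (ha : a ∈ Γ) : q Γ (minus Γ a ha) = a := rfl

@[simp] lemma isPlus_minus {a : ℝ} (ha : a ∈ Γ) : isPlus (minus Γ a ha) = false := rfl

@[simp] lemma q_act {c μ : ℝ} (h : ∀ t ∈ Γ, μ * (t + c) ∈ Γ) (x : RGamma Γ) :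
    q Γ (act Γ c μ h x) = μ * (q Γ x + c) := rfl

@[simp] lemma isPlus_act {c μ : ℝ} (h : ∀ t ∈ Γ, μ * (t + c) ∈ Γ) (x : RGamma Γ) :
    isPlus (act Γ c μ h x) = isPlus x := rfl

lemma ext_iff {x y : RGamma Γ} : x = y ↔ q Γ x = q Γ y ∧ isPlus x = isPlus y :=
  Subtype.ext_iff.trans Prod.ext_iff

lemma q_mem_of_isPlus {x : RGamma Γ} (hx : isPlus x = true) : q Γ x ∈ Γ :=
  x.2.resolve_right (by simp [← hx, isPlus])

lemma le_iff {x y : RGamma Γ} : x ≤ y ↔ q Γ x < q Γ y ∨ q Γ x = q Γ y ∧ isPlus x ≤ isPlus y :=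
  Prod.Lex.le_iff

lemma lt_iff {x y : RGamma Γ} : x < y ↔ q Γ x < q Γ y ∨ q Γ x = q Γ y ∧ isPlus x < isPlus y :=
  Prod.Lex.lt_iff

lemma lt_of_q_lt {x y : RGamma Γ} (h : q Γ x < q Γ y) : x < y := lt_iff.2 (Or.inl h)

lemma q_mono : Monotone (q Γ) := fun _ _ h => (le_iff.1 h).elim le_of_lt (·.1.le)

lemma isPlus_eq_of_lt_of_q_eq {x y : RGamma Γ} (hlt : x < y) (hq : q Γ x = q Γ y) :
    isPlus x = false ∧ isPlus y = true := by
  have := ((lt_iff.1 hlt).resolve_left hq.not_lt).2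
  revert this
  cases isPlus x <;> cases isPlus y <;> decide

lemma exists_isLUB (S : Set (RGamma Γ)) (hne : S.Nonempty) (hbdd : BddAbove S) :
    ∃ c, IsLUB S c := by
  set r := sSup (q Γ '' S)
  have hr : IsLUB (q Γ '' S) r := isLUB_csSup (hne.image _) (q_mono.map_bddAbove hbdd)
  -- either `S` has the maximum `r₊`, or `r₋` (the point `r` itself if `r ∉ Γ`) is its supremum
  by_cases hmax : ∃ x ∈ S, q Γ x = r ∧ isPlus x = true
  · obtain ⟨x, hxS, hxr, hx⟩ := hmax
    refine ⟨x, fun y hy => le_iff.2 ?_, fun u hu => hu hxS⟩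
    rcases (hr.1 ⟨y, hy, rfl⟩).lt_or_eq with hlt | heq
    · exact Or.inl (hxr ▸ hlt)
    · exact Or.inr ⟨heq.trans hxr.symm, hx ▸ Bool.le_true _⟩
  · refine ⟨lower Γ r, fun y hy => le_iff.2 ?_, fun u hu => le_iff.2 ?_⟩
    · rcases (hr.1 ⟨y, hy, rfl⟩).lt_or_eq with hlt | heq
      · exact Or.inl hlt
      · exact Or.inr ⟨heq, le_of_eq (Bool.eq_false_iff.2 fun hy' => hmax ⟨y, hy, heq, hy'⟩)⟩
    · rcases (hr.2 (q_mono.mem_upperBounds_image hu)).lt_or_eq with hlt | heq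
      · exact Or.inl hlt
      · exact Or.inr ⟨heq, Bool.false_le _⟩

instance : Inhabited (RGamma Γ) := ⟨lower Γ 0⟩

noncomputable instance : ConditionallyCompleteLinearOrder (RGamma Γ) := .ofExistsIsLUB exists_isLUB

lemma exists_pos_forall_lt_dist_of_lt (m : MetricSpace (RGamma Γ))
    (hm : m.toUniformSpace.toTopologicalSpace = inferInstanceAs (TopologicalSpace (RGamma Γ)))
    {a b c d : RGamma Γ} (hbc : b < c) :
    ∃ ε > (0 : ℝ), ∀ x ∈ Icc a b, ∀ y ∈ Icc c d, ε < m.dist x y := by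
  have hcompact (u v : RGamma Γ) : @IsCompact _ m.toUniformSpace.toTopologicalSpace (Icc u v) := by
    rw [hm]; exact isCompact_Icc
  exact @Metric.exists_pos_forall_lt_dist _ m _ _ (hcompact a b)
    (@IsCompact.isClosed _ m.toUniformSpace.toTopologicalSpace _ _ (hcompact c d))
    (disjoint_left.2 fun _ hb hc => (hb.2.trans_lt hbc).not_ge hc.1)

lemma mem_unitInterval_of_q_mem_Ioo {x : RGamma Γ} (hx : q Γ x ∈ Ioo 0 1) :
    x ∈ unitInterval Γ :=
  ⟨(Prod.Lex.lt_iff.2 (Or.inl hx.1)).le, (Prod.Lex.lt_iff.2 (Or.inl hx.2)).le⟩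

end RGamma

namespace steinRing

variable {lam : ℝ}

lemma self_mem : lam ∈ steinRing lam := Subring.subset_closure (mem_insert _ _)

lemma inv_self_mem : lam⁻¹ ∈ steinRing lam := Subring.subset_closure (mem_insert_of_mem _ rfl)

lemma zpow_self_mem (n : ℤ) : lam ^ n ∈ steinRing lam := by
  rcases n with n | n
  · rw [Int.ofNat_eq_natCast, zpow_natCast]
    exact pow_mem self_mem n
  · rw [zpow_negSucc, ← inv_pow]
    exact pow_mem inv_self_mem (n + 1)

lemma zpow_mul_add_mem {c : ℝ} (hc : c ∈ steinRing lam) (n : ℤ) :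
    ∀ t ∈ steinRing lam, lam ^ n * (t + c) ∈ steinRing lam :=
  fun _ ht => mul_mem (zpow_self_mem n) (add_mem ht hc)

lemma dense (h0 : 0 < lam) (h1 : lam < 1) : Dense (steinRing lam) :=
  AddSubgroup.dense_of_not_isolated_zero (Subring.closure {lam, lam⁻¹}).toAddSubgroup
    fun ε hε => by
      obtain ⟨n, hn⟩ := exists_pow_lt_of_lt_one hε h1
      exact ⟨lam ^ n, pow_mem self_mem n, pow_pos h0 n, hn⟩

end steinRing

lemma exists_zpow_mul_mem_Ioc {lam δ : ℝ} (h0 : 0 < lam) (h1 : lam < 1) (hδ : 0 < δ) :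
    ∃ n : ℤ, lam ^ n * δ ∈ Ioc lam 1 := by
  obtain ⟨n, hlo, hhi⟩ := exists_mem_Ioc_zpow hδ ((one_lt_inv₀ h0).2 h1)
  have hpos : 0 < lam ^ (n + 1) := zpow_pos h0 _
  refine ⟨n + 1, ?_, ?_⟩
  · calc lam = lam ^ (n + 1) * lam⁻¹ ^ n := by
          rw [inv_zpow', ← zpow_add₀ h0.ne']; simp
      _ < lam ^ (n + 1) * δ := mul_lt_mul_of_pos_left hlo hpos
  · calc lam ^ (n + 1) * δ ≤ lam ^ (n + 1) * lam⁻¹ ^ (n + 1) :=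
          mul_le_mul_of_nonneg_left hhi hpos.le
      _ = 1 := by rw [inv_zpow, mul_inv_cancel₀ hpos.ne']

lemma steinRing.exists_affine_separating {lam : ℝ} (h0 : 0 < lam) (h1 : lam < 1) {a b : ℝ}
    (hab : a < b) : ∃ c ∈ steinRing lam, ∃ n : ℤ,
      lam ^ n * (a + c) ∈ Ioo 0 (lam / 4) ∧ lam ^ n * (b + c) ∈ Ioo (lam / 2) 1 := by
  obtain ⟨n, hlo, hhi⟩ := exists_zpow_mul_mem_Ioc h0 h1 (by linarith : 0 < 2 * (b - a))
  have hμ : 0 < lam ^ n := zpow_pos h0 n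
  obtain ⟨c, hc, hac, hca⟩ := (steinRing.dense h0 h1).exists_between
    (by linarith [div_pos (div_pos h0 four_pos) hμ] : -a < lam / 4 / lam ^ n - a)
  have hx : lam ^ n * (a + c) ∈ Ioo 0 (lam / 4) :=
    ⟨by nlinarith, by rwa [← lt_div_iff₀' hμ, ← lt_sub_iff_add_lt']⟩
  refine ⟨c, hc, n, hx, ?_, ?_⟩ <;> nlinarith [hx.1, hx.2]

open RGamma in
theorem stein_partial_action_expansive_general (lam : ℝ) (h0 : 0 < lam) (h1 : lam < 1)
    (m : MetricSpace (RGamma (steinRing lam)))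
    (hm : m.toUniformSpace.toTopologicalSpace
            = inferInstanceAs (TopologicalSpace (RGamma (steinRing lam)))) :
    ∃ ε > (0:ℝ), ∀ x y : RGamma (steinRing lam),
      x ∈ RGamma.unitInterval (steinRing lam) → y ∈ RGamma.unitInterval (steinRing lam) →
      x ≠ y →
      ∃ (c : ℝ) (_ : c ∈ steinRing lam) (n : ℤ)
        (h : ∀ t ∈ steinRing lam, lam ^ n * (t + c) ∈ steinRing lam),
        RGamma.act (steinRing lam) c (lam ^ n) h x ∈ RGamma.unitInterval (steinRing lam) ∧
        RGamma.act (steinRing lam) c (lam ^ n) h y ∈ RGamma.unitInterval (steinRing lam) ∧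
        ε < m.toPseudoMetricSpace.toDist.dist
              (RGamma.act (steinRing lam) c (lam ^ n) h x)
              (RGamma.act (steinRing lam) c (lam ^ n) h y) := by
  obtain ⟨ε₁, hε₁, hsep⟩ := exists_pos_forall_lt_dist_of_lt m hm
    (a := plus _ 0 (zero_mem _)) (d := minus _ 1 (one_mem _))
    (lt_of_q_lt (show lam / 4 < lam / 2 by linarith) :
      lower (steinRing lam) (lam / 4) < lower _ (lam / 2))
  set ε₂ := m.dist (minus _ lam steinRing.self_mem) (plus _ lam steinRing.self_mem)
  have hε₂ : 0 < ε₂ := (@dist_pos _ m _ _).2 fun h => by simpa using congrArg isPlus h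
  refine ⟨min ε₁ (ε₂ / 2), by positivity, fun x y hx hy hxy => ?_⟩
  wlog hlt : x < y generalizing x y
  · obtain ⟨c, hc, n, h, hgy, hgx, hd⟩ := this y x hy hx hxy.symm (hxy.lt_or_gt.resolve_left hlt)
    exact ⟨c, hc, n, h, hgx, hgy, @dist_comm _ m.toPseudoMetricSpace _ _ ▸ hd⟩
  rcases (q_mono hlt.le).lt_or_eq with hq | hq
  · obtain ⟨c, hc, n, hgx, hgy⟩ := steinRing.exists_affine_separating h0 h1 hq
    refine ⟨c, hc, n, steinRing.zpow_mul_add_mem hc n,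
      mem_unitInterval_of_q_mem_Ioo ⟨hgx.1, hgx.2.trans (by linarith)⟩,
      mem_unitInterval_of_q_mem_Ioo ⟨(half_pos h0).trans hgy.1, hgy.2⟩,
      (min_le_left _ _).trans_lt (hsep _ ⟨?_, ?_⟩ _ ⟨?_, ?_⟩)⟩
    exacts [le_of_lt (lt_of_q_lt hgx.1), le_of_lt (lt_of_q_lt hgx.2),
      le_of_lt (lt_of_q_lt hgy.1), le_of_lt (lt_of_q_lt hgy.2)]
  · obtain ⟨hx', hy'⟩ := isPlus_eq_of_lt_of_q_eq hlt hq
    have hc : lam - q _ x ∈ steinRing lam := sub_mem steinRing.self_mem (hq ▸ q_mem_of_isPlus hy')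
    have h := steinRing.zpow_mul_add_mem hc 0
    have hgx : act _ _ _ h x = minus _ lam steinRing.self_mem := ext_iff.2 (by simp [hx'])
    have hgy : act _ _ _ h y = plus _ lam steinRing.self_mem := ext_iff.2 (by simp [hy', ← hq])
    refine ⟨_, hc, 0, h, hgx ▸ mem_unitInterval_of_q_mem_Ioo ⟨h0, h1⟩,
      hgy ▸ mem_unitInterval_of_q_mem_Ioo ⟨h0, h1⟩, ?_⟩
    rw [hgx, hgy]
    exact (min_le_right _ _).trans_lt (half_lt_self hε₂)

/-- for `λ ∈ (0,1)` irrational and `Γ = ℤ[λ,λ⁻¹]`, the partial action of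
`Γ ⋊ ⟨λ⟩` on the Cantor space `[0₊,1₋] ⊂ ℝ_Γ` is expansive: for any compatible metric
there is `ε > 0` such that any two distinct points of `[0₊,1₋]` are moved, by some group
element `(c, λⁿ)` keeping both points inside `[0₊,1₋]`, to points at distance `> ε`. -/
theorem stein_partial_action_expansive (lam : ℝ) (h0 : 0 < lam) (h1 : lam < 1)
    (hirr : Irrational lam)
    (m : MetricSpace (RGamma (steinRing lam)))
    (hm : m.toUniformSpace.toTopologicalSpace
            = inferInstanceAs (TopologicalSpace (RGamma (steinRing lam)))) :
    ∃ ε > (0:ℝ), ∀ x y : RGamma (steinRing lam),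
      x ∈ RGamma.unitInterval (steinRing lam) → y ∈ RGamma.unitInterval (steinRing lam) →
      x ≠ y →
      ∃ (c : ℝ) (_ : c ∈ steinRing lam) (n : ℤ)
        (h : ∀ t ∈ steinRing lam, lam ^ n * (t + c) ∈ steinRing lam),
        RGamma.act (steinRing lam) c (lam ^ n) h x ∈ RGamma.unitInterval (steinRing lam) ∧
        RGamma.act (steinRing lam) c (lam ^ n) h y ∈ RGamma.unitInterval (steinRing lam) ∧
        ε < m.toPseudoMetricSpace.toDist.dist
              (RGamma.act (steinRing lam) c (lam ^ n) h x)
              (RGamma.act (steinRing lam) c (lam ^ n) h y) :=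
  stein_partial_action_expansive_general lam h0 h1 m hm
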